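/- Let G be a torsion-free normed Abelian group with collinear zero-mean triples, and let a, b ∈ G be nonzero with m, n ∈ ℕ, m, n ≥ 1. Then |a - b| < |a| + |b| if and only if |ma - nb| < |ma| + |nb|. -/

import Mathlib

def IsGroupNorm {G : Type*} [AddCommGroup G] (ν : G → ℝ) : Prop :=
  (∀ g, 0 ≤ ν g) ∧ (∀ g h, ν (g + h) ≤ ν g + ν h) ∧
  (∀ g, ν (-g) = ν g) ∧ (∀ g, ν g = 0 ↔ g = 0)

def HasNBP {G : Type*} [AddCommGroup G] (ν : G → ℝ) : Prop :=
  ∀ (n : ℕ) (g : Fin n → G), (∑ i, g i) = 0 →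
    ∃ f : Fin n → Fin n → G,
      (∀ i j, f i j = - f j i) ∧ (∀ i, f i i = 0) ∧
      (∀ i, g i = ∑ j, f i j) ∧ (∀ i, ν (g i) = ∑ j, ν (f i j))

def HasCZT {G : Type*} [AddCommGroup G] (ν : G → ℝ) : Prop :=
  ∀ a b c : G, a + b + c = 0 →
    ν a + ν b = ν c ∨ ν a + ν c = ν b ∨ ν b + ν c = ν a

def IsIndecomposable {G : Type*} [AddCommGroup G] (ν : G → ℝ) (g : G) : Prop :=
  ∀ h : G, ν h + ν (g - h) = ν g → h = 0 ∨ h = g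

/-!
Applying the collinearity of zero-mean triples to `(g, g, -2g)` and using that `G` has no
`2`-torsion gives `|2g| = 2|g|`; iterating and sandwiching `k • g` between `0` and `2 ^ k • g`
makes the norm homogeneous. For a homogeneous norm, equality `|x - y| = |x| + |y|` in the
triangle inequality is unchanged when `x` is replaced by `k • x` with `k ≥ 1` (both directions
are one triangle inequality), so scaling `a` by `m` and then `b` by `n` preserves the strict
inequality.
-/

theorem map_two_pow_nsmul_of_map_two_nsmul {G : Type*} [AddCommGroup G] {ν : G → ℝ}
    (h2 : ∀ g : G, ν (2 • g) = 2 * ν g) (j : ℕ) (g : G) : ν (2 ^ j • g) = 2 ^ j * ν g := by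
  induction j with
  | zero => simp
  | succ j ih => rw [pow_succ', mul_smul, h2, ih, pow_succ]; ring

namespace IsGroupNorm

variable {G : Type*} [AddCommGroup G] {ν : G → ℝ}

theorem map_add_le (hν : IsGroupNorm ν) (x y : G) : ν (x + y) ≤ ν x + ν y :=
  hν.2.1 x y

theorem map_neg (hν : IsGroupNorm ν) (x : G) : ν (-x) = ν x :=
  hν.2.2.1 x

theorem map_eq_zero_iff (hν : IsGroupNorm ν) {x : G} : ν x = 0 ↔ x = 0 :=
  hν.2.2.2 x

theorem map_zero (hν : IsGroupNorm ν) : ν 0 = 0 :=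
  hν.map_eq_zero_iff.mpr rfl

theorem map_sub_le (hν : IsGroupNorm ν) (x y : G) : ν (x - y) ≤ ν x + ν y := by
  simpa only [sub_eq_add_neg, hν.map_neg y] using hν.map_add_le x (-y)

theorem map_sub_comm (hν : IsGroupNorm ν) (x y : G) : ν (x - y) = ν (y - x) := by
  rw [← hν.map_neg (y - x), neg_sub]

theorem map_sub_eq_add_comm (hν : IsGroupNorm ν) (x y : G) :
    ν (x - y) = ν x + ν y ↔ ν (y - x) = ν y + ν x := by
  rw [hν.map_sub_comm, add_comm (ν x)]

theorem map_nsmul_le (hν : IsGroupNorm ν) (k : ℕ) (g : G) : ν (k • g) ≤ k * ν g := by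
  induction k with
  | zero => simp [hν.map_zero]
  | succ k ih =>
    rw [succ_nsmul]
    push_cast
    linarith [hν.map_add_le (k • g) g]

theorem map_two_nsmul (hν : IsGroupNorm ν) (hczt : HasCZT ν)
    (htf : ∀ g : G, 2 • g = 0 → g = 0) (g : G) : ν (2 • g) = 2 * ν g := by
  have hg : ν (2 • g) = 0 → ν (2 • g) = 2 * ν g := fun h => by
    rw [h, htf g (hν.map_eq_zero_iff.mp h), hν.map_zero, mul_zero]
  rcases hczt g g (-(2 • g)) (by abel) with h | h | h <;> rw [hν.map_neg] at h
  · exact h.symm.trans (two_mul _).symm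
  all_goals exact hg (by linarith)

theorem map_nsmul_of_map_two_nsmul (hν : IsGroupNorm ν) (h2 : ∀ g : G, ν (2 • g) = 2 * ν g)
    (k : ℕ) (g : G) : ν (k • g) = k * ν g := by
  refine le_antisymm (hν.map_nsmul_le k g) ?_
  have hk : k ≤ 2 ^ k := Nat.lt_two_pow_self.le
  have hsplit : ν (2 ^ k • g) ≤ ν (k • g) + ν ((2 ^ k - k) • g) := by
    conv_lhs => rw [← Nat.add_sub_cancel' hk, add_smul]
    exact hν.map_add_le _ _
  have hrest := hν.map_nsmul_le (2 ^ k - k) g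
  rw [map_two_pow_nsmul_of_map_two_nsmul h2] at hsplit
  rw [Nat.cast_sub hk] at hrest
  push_cast at hsplit hrest
  linarith

theorem map_nsmul (hν : IsGroupNorm ν) (hczt : HasCZT ν)
    (htf : ∀ g : G, 2 • g = 0 → g = 0) (k : ℕ) (g : G) : ν (k • g) = k * ν g :=
  hν.map_nsmul_of_map_two_nsmul (hν.map_two_nsmul hczt htf) k g

theorem map_nsmul_sub_eq_add_iff (hν : IsGroupNorm ν)
    (hhom : ∀ (k : ℕ) (g : G), ν (k • g) = k * ν g) {k : ℕ} (hk : 0 < k) (x y : G) :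
    ν (k • x - y) = ν (k • x) + ν y ↔ ν (x - y) = ν x + ν y := by
  obtain ⟨j, rfl⟩ := Nat.exists_eq_add_of_lt hk
  rw [zero_add, hhom]
  constructor
  · intro h
    have hle : ν ((j + 1) • x - y) ≤ ν (j • x) + ν (x - y) := by
      rw [show (j + 1) • x - y = j • x + (x - y) by rw [succ_nsmul]; abel]
      exact hν.map_add_le _ _
    rw [h, hhom] at hle
    push_cast at hle
    linarith [hν.map_sub_le x y]
  · intro h
    have hle : ν ((j + 1) • (x - y)) ≤ ν ((j + 1) • x - y) + ν (j • y) := by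
      rw [show (j + 1) • (x - y) = ((j + 1) • x - y) - j • y by rw [smul_sub, succ_nsmul y j]; abel]
      exact hν.map_sub_le _ _
    have hge := hν.map_sub_le ((j + 1) • x) y
    rw [hhom, hhom, h] at hle
    rw [hhom] at hge
    push_cast at hle hge ⊢
    linarith

end IsGroupNorm

theorem stmt17_general {G : Type*} [AddCommGroup G] (ν : G → ℝ) (hν : IsGroupNorm ν)
    (htf : ∀ (n : ℕ) (g : G), 1 ≤ n → n • g = 0 → g = 0)
    (hczt : HasCZT ν) (a b : G)
    (m n : ℕ) (hm : 1 ≤ m) (hn : 1 ≤ n) :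
    ν (a - b) < ν a + ν b ↔ ν (m • a - n • b) < ν (m • a) + ν (n • b) := by
  have hhom := hν.map_nsmul hczt fun g => htf 2 g one_le_two
  have heq : ν (m • a - n • b) = ν (m • a) + ν (n • b) ↔ ν (a - b) = ν a + ν b := by
    rw [hν.map_sub_eq_add_comm, hν.map_nsmul_sub_eq_add_iff hhom hn, hν.map_sub_eq_add_comm,
      hν.map_nsmul_sub_eq_add_iff hhom hm]
  simp only [lt_iff_le_and_ne, hν.map_sub_le, true_and]
  exact not_congr heq.symm

theorem stmt17 {G : Type*} [AddCommGroup G] (ν : G → ℝ) (hν : IsGroupNorm ν)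
    (htf : ∀ (n : ℕ) (g : G), 1 ≤ n → n • g = 0 → g = 0)
    (hczt : HasCZT ν) (a b : G) (ha : a ≠ 0) (hb : b ≠ 0)
    (m n : ℕ) (hm : 1 ≤ m) (hn : 1 ≤ n) :
    ν (a - b) < ν a + ν b ↔ ν (m • a - n • b) < ν (m • a) + ν (n • b) :=
  stmt17_general ν hν htf hczt a b m n hm hn
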